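/- arXiv:1309.2031 — 5 statements merged into one kernel-verified Lean document; each statement's English description precedes it below -/
import Mathlib

section
/- The objective function f is convex on (ℝ^d)^n. -/
open Finset Filter

noncomputable def obj {d n : ℕ} {J : Type*} (a : J → EuclideanSpace ℝ (Fin d))
    (A : Fin n → Finset J) (dhat : Fin n → J → ℝ)
    (B : Fin n → Finset (Fin n)) (lhat : Fin n → Fin n → ℝ)
    (x : Fin n → EuclideanSpace ℝ (Fin d)) : ℝ :=
  (∑ i, ∑ j ∈ A i, max (‖x i - a j‖ - dhat i j) 0 ^ 2)
    + (1 / 2) * ∑ i, ∑ q ∈ B i, max (‖x i - x q‖ - lhat i q) 0 ^ 2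

/-
Each summand of `obj` has the form `max (‖g x‖ - c) 0 ^ 2` with `g` affine: `‖g x‖` is convex,
so `max (‖g x‖ - c) 0` is a nonnegative convex function, and the square of a nonnegative convex
function is convex. A nonnegative combination of convex functions is convex.
-/

theorem ConvexOn.sum {𝕜 E β ι : Type*} [Semiring 𝕜] [PartialOrder 𝕜] [AddCommMonoid E]
    [AddCommMonoid β] [PartialOrder β] [IsOrderedAddMonoid β] [SMul 𝕜 E] [Module 𝕜 β]
    {s : Set E} (hs : Convex 𝕜 s) (t : Finset ι) {f : ι → E → β}
    (hf : ∀ i ∈ t, ConvexOn 𝕜 s (f i)) :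
    ConvexOn 𝕜 s (fun x => ∑ i ∈ t, f i x) := by
  rw [← Finset.sum_fn]
  exact Finset.sum_induction f (ConvexOn 𝕜 s) (fun _ _ => ConvexOn.add)
    (convexOn_const 0 hs) hf

theorem ConvexOn.sq_max_sub_const_zero {E : Type*} [AddCommGroup E] [Module ℝ E] {s : Set E}
    {f : E → ℝ} (hf : ConvexOn ℝ s f) (c : ℝ) :
    ConvexOn ℝ s (fun x => max (f x - c) 0 ^ 2) :=
  ((hf.add_const (-c)).sup (convexOn_const 0 hf.1)).pow (fun _ _ => le_sup_right) 2

theorem convexOn_sq_max_norm_sub_const_zero {E F : Type*} [AddCommGroup E] [Module ℝ E]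
    [SeminormedAddCommGroup F] [NormedSpace ℝ F] (g : E →ᵃ[ℝ] F) (c : ℝ) :
    ConvexOn ℝ Set.univ (fun x => max (‖g x‖ - c) 0 ^ 2) :=
  ((convexOn_norm convex_univ).comp_affineMap g).sq_max_sub_const_zero c

theorem stmt0_general (d n : ℕ) {J : Type*}
    (a : J → EuclideanSpace ℝ (Fin d))
    (A : Fin n → Finset J) (dhat : Fin n → J → ℝ)
    (B : Fin n → Finset (Fin n)) (lhat : Fin n → Fin n → ℝ) :
    ConvexOn ℝ Set.univ (obj a A dhat B lhat) := by
  let proj (i : Fin n) := LinearMap.proj (R := ℝ) (φ := fun _ => EuclideanSpace ℝ (Fin d)) i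
  have anchor (i : Fin n) (j : J) : ConvexOn ℝ Set.univ
      (fun x : Fin n → EuclideanSpace ℝ (Fin d) => max (‖x i - a j‖ - dhat i j) 0 ^ 2) :=
    convexOn_sq_max_norm_sub_const_zero
      ((proj i).toAffineMap - AffineMap.const ℝ _ (a j)) (dhat i j)
  have pair (i q : Fin n) : ConvexOn ℝ Set.univ
      (fun x : Fin n → EuclideanSpace ℝ (Fin d) => max (‖x i - x q‖ - lhat i q) 0 ^ 2) :=
    convexOn_sq_max_norm_sub_const_zero (proj i - proj q).toAffineMap (lhat i q)
  have anchors := ConvexOn.sum convex_univ univ fun i _ =>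
    ConvexOn.sum convex_univ (A i) fun j _ => anchor i j
  have pairs := ConvexOn.sum convex_univ univ fun i _ =>
    ConvexOn.sum convex_univ (B i) fun q _ => pair i q
  exact anchors.add (pairs.smul (by norm_num : (0 : ℝ) ≤ 1 / 2))

theorem stmt0 (d n : ℕ) (hd : 1 ≤ d) (hn : 1 ≤ n) {J : Type*} [Fintype J]
    (a : J → EuclideanSpace ℝ (Fin d))
    (A : Fin n → Finset J) (dhat : Fin n → J → ℝ)
    (B : Fin n → Finset (Fin n)) (lhat : Fin n → Fin n → ℝ)
    (hdhat : ∀ i, ∀ j ∈ A i, 0 ≤ dhat i j)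
    (hlhat : ∀ i, ∀ q ∈ B i, 0 ≤ lhat i q)
    (hBirr : ∀ i : Fin n, i ∉ B i)
    (hBsymm : ∀ i q : Fin n, q ∈ B i ↔ i ∈ B q)
    (hlsymm : ∀ i q : Fin n, lhat i q = lhat q i) :
    ConvexOn ℝ Set.univ (obj a A dhat B lhat) :=
  stmt0_general d n a A dhat B lhat
end

section
/- The objective function f is continuously differentiable on (ℝ^d)^n, and for every s ∈ {1,…,n} and every configuration x = (x_1,…,x_n), the partial gradient with respect to the block x_s is ∇_s f(x) = 2 Σ_{j∈A_s} (x_s − P_{B(a_j, d̂_{sj})}(x_s)) + 2 Σ_{q∈B_s} (x_s − P_{B(x_q, l̂_{sq})}(x_s)). -/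
/-!
Every summand of `f` is a squared distance `φ z = ‖z - P z‖ ^ 2` to a closed ball, `P` being the
nearest-point map `projBall`. Since `P u` and `P z` are admissible competitors for `z` and `u`,
`|φ u - φ z - ⟪2 (z - P z), u - z⟫| ≤ (2 ‖(u - P u) - (z - P z)‖ + ‖u - z‖) ‖u - z‖`,
so continuity of `P` makes `2 (z - P z)` the gradient of `φ`, and a continuous one. In the block
`x_s`, the pair terms containing `s` appear once as `(s, q)` and once as `(q, s)`, which absorbs the
factor `1 / 2`; all other terms are constant in `x_s`.
-/

open Finset Filter Topology InnerProductSpace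

noncomputable def projBall {d : ℕ} (a : EuclideanSpace ℝ (Fin d)) (r : ℝ)
    (z : EuclideanSpace ℝ (Fin d)) : EuclideanSpace ℝ (Fin d) :=
  if ‖z - a‖ ≤ r then z else a + (r / ‖z - a‖) • (z - a)

/-- Partial gradient of `f` with respect to the `i`-th block. -/
noncomputable def blockGrad {d n : ℕ} (f : (Fin n → EuclideanSpace ℝ (Fin d)) → ℝ)
    (i : Fin n) (x : Fin n → EuclideanSpace ℝ (Fin d)) : EuclideanSpace ℝ (Fin d) :=
  gradient (fun y => f (Function.update x i y)) (x i)

section NearestPoint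

variable {F : Type*} [NormedAddCommGroup F] [InnerProductSpace ℝ F]

theorem abs_norm_sub_sq_sub_inner_le {P : F → F} (hP : ∀ u v, ‖u - P u‖ ≤ ‖u - P v‖) (u z : F) :
    |‖u - P u‖ ^ 2 - ‖z - P z‖ ^ 2 - ⟪(2 : ℝ) • (z - P z), u - z⟫_ℝ|
      ≤ (2 * ‖(u - P u) - (z - P z)‖ + ‖u - z‖) * ‖u - z‖ := by
  have hup : ‖u - P u‖ ^ 2 ≤ ‖(z - P z) + (u - z)‖ ^ 2 := by
    rw [show (z - P z) + (u - z) = u - P z by abel]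
    exact pow_le_pow_left₀ (norm_nonneg _) (hP u z) 2
  have hlow : ‖z - P z‖ ^ 2 ≤ ‖(u - P u) - (u - z)‖ ^ 2 := by
    rw [show (u - P u) - (u - z) = z - P u by abel]
    exact pow_le_pow_left₀ (norm_nonneg _) (hP z u) 2
  rw [norm_add_sq_real] at hup
  rw [norm_sub_sq_real (u - P u) (u - z)] at hlow
  have hcs := abs_real_inner_le_norm ((u - P u) - (z - P z)) (u - z)
  rw [inner_sub_left, abs_le] at hcs
  rw [real_inner_smul_left, abs_le]
  constructor <;> nlinarith [norm_nonneg (u - z), norm_nonneg ((u - P u) - (z - P z))]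

variable [CompleteSpace F]

theorem hasGradientAt_norm_sub_sq {P : F → F} (hP : ∀ u v, ‖u - P u‖ ≤ ‖u - P v‖) {z : F}
    (hz : ContinuousAt P z) :
    HasGradientAt (fun u => ‖u - P u‖ ^ 2) ((2 : ℝ) • (z - P z)) z := by
  rw [hasGradientAt_iff_isLittleO, Asymptotics.isLittleO_iff]
  intro ε hε
  have hδ : Tendsto (fun u => 2 * ‖(u - P u) - (z - P z)‖ + ‖u - z‖) (𝓝 z) (𝓝 0) := by
    have hg : Tendsto (fun u => u - P u) (𝓝 z) (𝓝 (z - P z)) := tendsto_id.sub hz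
    have h1 := (tendsto_iff_norm_sub_tendsto_zero.1 hg).const_mul 2
    have h2 := tendsto_iff_norm_sub_tendsto_zero.1 (tendsto_id (x := 𝓝 z))
    simpa using h1.add h2
  filter_upwards [hδ.eventually (Iio_mem_nhds hε)] with u hu
  rw [Real.norm_eq_abs]
  exact (abs_norm_sub_sq_sub_inner_le hP u z).trans
    (mul_le_mul_of_nonneg_right hu.le (norm_nonneg _))

theorem contDiff_one_norm_sub_sq {P : F → F} (hP : ∀ u v, ‖u - P u‖ ≤ ‖u - P v‖)
    (hc : Continuous P) : ContDiff ℝ 1 (fun u => ‖u - P u‖ ^ 2) :=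
  contDiff_one_iff_hasFDerivAt.2 ⟨fun z => toDual ℝ F ((2 : ℝ) • (z - P z)),
    (toDual ℝ F).continuous.comp (continuous_const.smul (continuous_id.sub hc)),
    fun _ => (hasGradientAt_norm_sub_sq hP hc.continuousAt).hasFDerivAt⟩

end NearestPoint

section ProjBall

variable {d : ℕ} (c : EuclideanSpace ℝ (Fin d)) {r : ℝ}

-- Dividing by `max r ‖z - c‖` instead of `‖z - c‖` makes the formula continuous in `z` for `0 < r`.
theorem projBall_eq (hr : 0 ≤ r) (z : EuclideanSpace ℝ (Fin d)) :
    projBall c r z = c + (r / max r ‖z - c‖) • (z - c) := by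
  unfold projBall
  split_ifs with h
  · rw [max_eq_left h]
    rcases hr.eq_or_lt with rfl | hr
    · rw [norm_le_zero_iff, sub_eq_zero] at h
      simp [h]
    · simp [hr.ne']
  · rw [max_eq_right (not_le.1 h).le]

theorem continuous_projBall (hr : 0 ≤ r) : Continuous (projBall c r) := by
  rw [funext (projBall_eq c hr)]
  rcases hr.eq_or_lt with rfl | hr
  · simpa using continuous_const
  · exact continuous_const.add (Continuous.smul
      (continuous_const.div (by fun_prop) fun z => (lt_max_of_lt_left hr).ne') (by fun_prop))

theorem norm_projBall_sub_le (hr : 0 ≤ r) (z : EuclideanSpace ℝ (Fin d)) :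
    ‖projBall c r z - c‖ ≤ r := by
  rw [projBall_eq c hr, add_sub_cancel_left, norm_smul, Real.norm_eq_abs,
    abs_of_nonneg (by positivity), div_mul_eq_mul_div]
  rcases hr.eq_or_lt with rfl | hr
  · simp
  · exact div_le_of_le_mul₀ (hr.le.trans (le_max_left _ _)) hr.le
      (mul_le_mul_of_nonneg_left (le_max_right _ _) hr.le)

theorem norm_sub_projBall (hr : 0 ≤ r) (z : EuclideanSpace ℝ (Fin d)) :
    ‖z - projBall c r z‖ = max (‖z - c‖ - r) 0 := by
  unfold projBall
  split_ifs with h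
  · simp [h]
  · have hzc : 0 < ‖z - c‖ := hr.trans_lt (not_le.1 h)
    rw [max_eq_left (by linarith),
      show z - (c + (r / ‖z - c‖) • (z - c)) = (1 - r / ‖z - c‖) • (z - c) by module,
      norm_smul, Real.norm_eq_abs, abs_of_nonneg, sub_mul, div_mul_cancel₀ _ hzc.ne', one_mul]
    rw [sub_nonneg, div_le_one hzc]
    exact (not_le.1 h).le

theorem norm_sub_projBall_le (hr : 0 ≤ r) (z v : EuclideanSpace ℝ (Fin d)) :
    ‖z - projBall c r z‖ ≤ ‖z - projBall c r v‖ := by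
  rw [norm_sub_projBall c hr]
  refine max_le ?_ (norm_nonneg _)
  have := norm_sub_le_norm_sub_add_norm_sub z (projBall c r v) c
  linarith [norm_projBall_sub_le c hr v]

theorem hasGradientAt_max_norm_sub_sq (hr : 0 ≤ r) (z : EuclideanSpace ℝ (Fin d)) :
    HasGradientAt (fun u => max (‖u - c‖ - r) 0 ^ 2) ((2 : ℝ) • (z - projBall c r z)) z := by
  simp only [← norm_sub_projBall c hr]
  exact hasGradientAt_norm_sub_sq (norm_sub_projBall_le c hr) (continuous_projBall c hr).continuousAt

theorem contDiff_max_norm_sub_sq (hr : 0 ≤ r) :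
    ContDiff ℝ 1 (fun u : EuclideanSpace ℝ (Fin d) => max (‖u - c‖ - r) 0 ^ 2) := by
  simp only [← norm_sub_projBall c hr]
  exact contDiff_one_norm_sub_sq (norm_sub_projBall_le c hr) (continuous_projBall c hr)

end ProjBall

theorem Finset.sum_sum_eq_two_nsmul_add_sum_erase {ι M : Type*} [Fintype ι] [DecidableEq ι]
    [AddCommMonoid M] {R : ι → Finset ι} (hirr : ∀ i, i ∉ R i)
    (hsymm : ∀ i q, q ∈ R i ↔ i ∈ R q) {w : ι → ι → M} (hw : ∀ i q, w i q = w q i) (s : ι) :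
    ∑ i, ∑ q ∈ R i, w i q
      = 2 • ∑ q ∈ R s, w s q + ∑ i ∈ univ.erase s, ∑ q ∈ (R i).erase s, w i q := by
  have hrow : ∀ i ∈ univ.erase s, ∑ q ∈ R i, w i q
      = (if s ∈ R i then w s i else 0) + ∑ q ∈ (R i).erase s, w i q := by
    intro i _
    split_ifs with h
    · rw [← add_sum_erase _ _ h, hw]
    · rw [erase_eq_of_notMem h, zero_add]
  have hcol : ∑ i ∈ univ.erase s, (if s ∈ R i then w s i else 0) = ∑ q ∈ R s, w s q := by
    rw [sum_erase _ (by simp [hirr]), ← sum_filter]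
    congr 1
    ext i
    simp [hsymm i s]
  rw [← add_sum_erase _ _ (mem_univ s), sum_congr rfl hrow, sum_add_distrib, hcol, two_nsmul,
    add_assoc]

theorem exists_obj_update_eq {d n : ℕ} {J : Type*} (a : J → EuclideanSpace ℝ (Fin d))
    (A : Fin n → Finset J) (dhat : Fin n → J → ℝ)
    (B : Fin n → Finset (Fin n)) (lhat : Fin n → Fin n → ℝ)
    (hBirr : ∀ i, i ∉ B i) (hBsymm : ∀ i q, q ∈ B i ↔ i ∈ B q)
    (hlsymm : ∀ i q, lhat i q = lhat q i) (s : Fin n) (x : Fin n → EuclideanSpace ℝ (Fin d)) :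
    ∃ C, ∀ y, obj a A dhat B lhat (Function.update x s y)
      = C + (∑ j ∈ A s, max (‖y - a j‖ - dhat s j) 0 ^ 2
          + ∑ q ∈ B s, max (‖y - x q‖ - lhat s q) 0 ^ 2) := by
  refine ⟨∑ i ∈ univ.erase s, ∑ j ∈ A i, max (‖x i - a j‖ - dhat i j) 0 ^ 2
    + (1 / 2) * ∑ i ∈ univ.erase s, ∑ q ∈ (B i).erase s, max (‖x i - x q‖ - lhat i q) 0 ^ 2,
    fun y => ?_⟩
  have hrest : ∀ i ≠ s, Function.update x s y i = x i := fun i hi => Function.update_of_ne hi y x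
  have hpairs_s : ∑ q ∈ B s, max (‖y - Function.update x s y q‖ - lhat s q) 0 ^ 2
      = ∑ q ∈ B s, max (‖y - x q‖ - lhat s q) 0 ^ 2 :=
    sum_congr rfl fun q hq => by rw [hrest q (ne_of_mem_of_not_mem hq (hBirr s))]
  have hanchors : ∑ i ∈ univ.erase s, ∑ j ∈ A i,
        max (‖Function.update x s y i - a j‖ - dhat i j) 0 ^ 2
      = ∑ i ∈ univ.erase s, ∑ j ∈ A i, max (‖x i - a j‖ - dhat i j) 0 ^ 2 :=
    sum_congr rfl fun i hi => by rw [hrest i (ne_of_mem_erase hi)]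
  have hpairs : ∑ i ∈ univ.erase s, ∑ q ∈ (B i).erase s,
        max (‖Function.update x s y i - Function.update x s y q‖ - lhat i q) 0 ^ 2
      = ∑ i ∈ univ.erase s, ∑ q ∈ (B i).erase s, max (‖x i - x q‖ - lhat i q) 0 ^ 2 :=
    sum_congr rfl fun i hi => sum_congr rfl fun q hq => by
      rw [hrest i (ne_of_mem_erase hi), hrest q (ne_of_mem_erase hq)]
  rw [obj, sum_sum_eq_two_nsmul_add_sum_erase hBirr hBsymm
    (fun i q => by rw [norm_sub_rev, hlsymm]) s, ← add_sum_erase _ _ (mem_univ s)]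
  simp only [Function.update_self]
  rw [hpairs_s, hanchors, hpairs, two_nsmul]
  ring

theorem stmt1_general (d n : ℕ) {J : Type*}
    (a : J → EuclideanSpace ℝ (Fin d))
    (A : Fin n → Finset J) (dhat : Fin n → J → ℝ)
    (B : Fin n → Finset (Fin n)) (lhat : Fin n → Fin n → ℝ)
    (hdhat : ∀ i, ∀ j ∈ A i, 0 ≤ dhat i j)
    (hlhat : ∀ i, ∀ q ∈ B i, 0 ≤ lhat i q)
    (hBirr : ∀ i : Fin n, i ∉ B i)
    (hBsymm : ∀ i q : Fin n, q ∈ B i ↔ i ∈ B q)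
    (hlsymm : ∀ i q : Fin n, lhat i q = lhat q i) :
    ContDiff ℝ 1 (obj a A dhat B lhat) ∧
    ∀ (s : Fin n) (x : Fin n → EuclideanSpace ℝ (Fin d)),
      blockGrad (obj a A dhat B lhat) s x
        = (2 : ℝ) • (∑ j ∈ A s, (x s - projBall (a j) (dhat s j) (x s)))
          + (2 : ℝ) • (∑ q ∈ B s, (x s - projBall (x q) (lhat s q) (x s))) := by
  constructor
  · refine (ContDiff.sum fun i _ => ContDiff.sum fun j hj => ?_).add
      (contDiff_const.mul (ContDiff.sum fun i _ => ContDiff.sum fun q hq => ?_))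
    · exact (contDiff_max_norm_sub_sq (a j) (hdhat i j hj)).comp (contDiff_apply ℝ _ i)
    · convert! (contDiff_max_norm_sub_sq 0 (hlhat i q hq)).comp
        ((contDiff_apply ℝ _ i).sub (contDiff_apply ℝ _ q)) using 1
      ext x; simp only [Function.comp_apply, sub_zero]
  · intro s x
    obtain ⟨C, hC⟩ := exists_obj_update_eq a A dhat B lhat hBirr hBsymm hlsymm s x
    have hA := HasFDerivAt.fun_sum fun j hj =>
      (hasGradientAt_max_norm_sub_sq (a j) (hdhat s j hj) (x s)).hasFDerivAt
    have hB := HasFDerivAt.fun_sum fun q hq =>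
      (hasGradientAt_max_norm_sub_sq (x q) (hlhat s q hq) (x s)).hasFDerivAt
    have hgrad : HasGradientAt (fun y => obj a A dhat B lhat (Function.update x s y))
        (∑ j ∈ A s, (2 : ℝ) • (x s - projBall (a j) (dhat s j) (x s))
          + ∑ q ∈ B s, (2 : ℝ) • (x s - projBall (x q) (lhat s q) (x s))) (x s) := by
      rw [funext hC, hasGradientAt_iff_hasFDerivAt, map_add, map_sum, map_sum]
      exact (hA.add hB).const_add C
    rw [blockGrad, hgrad.gradient, smul_sum, smul_sum]

theorem stmt1 (d n : ℕ) (hd : 1 ≤ d) (hn : 1 ≤ n) {J : Type*} [Fintype J]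
    (a : J → EuclideanSpace ℝ (Fin d))
    (A : Fin n → Finset J) (dhat : Fin n → J → ℝ)
    (B : Fin n → Finset (Fin n)) (lhat : Fin n → Fin n → ℝ)
    (hdhat : ∀ i, ∀ j ∈ A i, 0 ≤ dhat i j)
    (hlhat : ∀ i, ∀ q ∈ B i, 0 ≤ lhat i q)
    (hBirr : ∀ i : Fin n, i ∉ B i)
    (hBsymm : ∀ i q : Fin n, q ∈ B i ↔ i ∈ B q)
    (hlsymm : ∀ i q : Fin n, lhat i q = lhat q i) :
    ContDiff ℝ 1 (obj a A dhat B lhat) ∧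
    ∀ (s : Fin n) (x : Fin n → EuclideanSpace ℝ (Fin d)),
      blockGrad (obj a A dhat B lhat) s x
        = (2 : ℝ) • (∑ j ∈ A s, (x s - projBall (a j) (dhat s j) (x s)))
          + (2 : ℝ) • (∑ q ∈ B s, (x s - projBall (x q) (lhat s q) (x s))) :=
  stmt1_general d n a A dhat B lhat hdhat hlhat hBirr hBsymm hlsymm
end

section
/- Under the connectivity assumption, the objective function f is coercive: f(x) → ∞ as ‖x‖ → ∞ (f tends to infinity along the cobounded filter on (ℝ^d)^n). -/
open Finset Filter

theorem stmt4 (d n : ℕ) (hd : 1 ≤ d) (hn : 1 ≤ n) {J : Type*} [Fintype J]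
    (a : J → EuclideanSpace ℝ (Fin d))
    (A : Fin n → Finset J) (dhat : Fin n → J → ℝ)
    (B : Fin n → Finset (Fin n)) (lhat : Fin n → Fin n → ℝ)
    (hdhat : ∀ i, ∀ j ∈ A i, 0 ≤ dhat i j)
    (hlhat : ∀ i, ∀ q ∈ B i, 0 ≤ lhat i q)
    (hBirr : ∀ i : Fin n, i ∉ B i)
    (hBsymm : ∀ i q : Fin n, q ∈ B i ↔ i ∈ B q)
    (hlsymm : ∀ i q : Fin n, lhat i q = lhat q i)
    (hconn : ∀ i : Fin n, ∃ (r : ℕ) (c : ℕ → Fin n), c 0 = i ∧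
      (∀ t, t < r → c (t + 1) ∈ B (c t)) ∧ (A (c r)).Nonempty) :
    Tendsto (obj a A dhat B lhat) (Bornology.cobounded (Fin n → EuclideanSpace ℝ (Fin d)))
      atTop := by
  classical
  set F := obj a A dhat B lhat with hF
  have hS1nn : ∀ x : Fin n → EuclideanSpace ℝ (Fin d),
      0 ≤ ∑ i, ∑ j ∈ A i, max (‖x i - a j‖ - dhat i j) 0 ^ 2 :=
    fun x => Finset.sum_nonneg fun i _ => Finset.sum_nonneg fun j _ => sq_nonneg _
  have hS2nn : ∀ x : Fin n → EuclideanSpace ℝ (Fin d),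
      0 ≤ ∑ i, ∑ q ∈ B i, max (‖x i - x q‖ - lhat i q) 0 ^ 2 :=
    fun x => Finset.sum_nonneg fun i _ => Finset.sum_nonneg fun q _ => sq_nonneg _
  have hFnn : ∀ x, 0 ≤ F x := by
    intro x
    have h1 := hS1nn x
    have h2 := hS2nn x
    simp only [hF, obj]
    linarith
  -- single-term bounds
  have hAterm : ∀ x i, ∀ j ∈ A i, max (‖x i - a j‖ - dhat i j) 0 ^ 2 ≤ 2 * F x := by
    intro x i j hj
    have h1 : max (‖x i - a j‖ - dhat i j) 0 ^ 2
        ≤ ∑ j' ∈ A i, max (‖x i - a j'‖ - dhat i j') 0 ^ 2 :=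
      Finset.single_le_sum (f := fun j' => max (‖x i - a j'‖ - dhat i j') 0 ^ 2)
        (fun j' _ => sq_nonneg _) hj
    have h2 : ∑ j' ∈ A i, max (‖x i - a j'‖ - dhat i j') 0 ^ 2
        ≤ ∑ i', ∑ j' ∈ A i', max (‖x i' - a j'‖ - dhat i' j') 0 ^ 2 :=
      Finset.single_le_sum (f := fun i' => ∑ j' ∈ A i', max (‖x i' - a j'‖ - dhat i' j') 0 ^ 2)
        (fun i' _ => Finset.sum_nonneg fun j' _ => sq_nonneg _) (Finset.mem_univ i)
    have h3 := hS2nn x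
    have h0 := hFnn x
    have hFx : F x = (∑ i', ∑ j' ∈ A i', max (‖x i' - a j'‖ - dhat i' j') 0 ^ 2)
        + (1 / 2) * ∑ i', ∑ q ∈ B i', max (‖x i' - x q‖ - lhat i' q) 0 ^ 2 := rfl
    linarith
  have hBterm : ∀ x i, ∀ q ∈ B i, max (‖x i - x q‖ - lhat i q) 0 ^ 2 ≤ 2 * F x := by
    intro x i q hq
    have h1 : max (‖x i - x q‖ - lhat i q) 0 ^ 2
        ≤ ∑ q' ∈ B i, max (‖x i - x q'‖ - lhat i q') 0 ^ 2 :=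
      Finset.single_le_sum (f := fun q' => max (‖x i - x q'‖ - lhat i q') 0 ^ 2)
        (fun q' _ => sq_nonneg _) hq
    have h2 : ∑ q' ∈ B i, max (‖x i - x q'‖ - lhat i q') 0 ^ 2
        ≤ ∑ i', ∑ q' ∈ B i', max (‖x i' - x q'‖ - lhat i' q') 0 ^ 2 :=
      Finset.single_le_sum (f := fun i' => ∑ q' ∈ B i', max (‖x i' - x q'‖ - lhat i' q') 0 ^ 2)
        (fun i' _ => Finset.sum_nonneg fun q' _ => sq_nonneg _) (Finset.mem_univ i)
    have h3 := hS1nn x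
    have hFx : F x = (∑ i', ∑ j' ∈ A i', max (‖x i' - a j'‖ - dhat i' j') 0 ^ 2)
        + (1 / 2) * ∑ i', ∑ q' ∈ B i', max (‖x i' - x q'‖ - lhat i' q') 0 ^ 2 := rfl
    linarith
  have key : ∀ (t s : ℝ), max t 0 ^ 2 ≤ s → t ≤ Real.sqrt s := by
    intro t s h
    calc t ≤ max t 0 := le_max_left _ _
      _ = Real.sqrt (max t 0 ^ 2) := (Real.sqrt_sq (le_max_right _ _)).symm
      _ ≤ Real.sqrt s := Real.sqrt_le_sqrt h
  have hdistB : ∀ x i, ∀ q ∈ B i, ‖x i - x q‖ ≤ lhat i q + Real.sqrt (2 * F x) := by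
    intro x i q hq
    have := key _ _ (hBterm x i q hq)
    linarith
  have hdistA : ∀ x i, ∀ j ∈ A i, ‖x i - a j‖ ≤ dhat i j + Real.sqrt (2 * F x) := by
    intro x i j hj
    have := key _ _ (hAterm x i j hj)
    linarith
  choose r c hc0 hcstep hAne using hconn
  choose j hj using hAne
  set Lmax := ∑ i, ∑ q ∈ B i, lhat i q with hLm
  set D0 := ∑ i, ∑ j' ∈ A i, dhat i j' with hD0
  set Am := ∑ jj : J, ‖a jj‖ with hAm
  set N : ℕ := (Finset.univ.sup r) + 1 with hN
  have hLnn : 0 ≤ Lmax :=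
    Finset.sum_nonneg fun i _ => Finset.sum_nonneg fun q hq => hlhat i q hq
  have hDnn : 0 ≤ D0 :=
    Finset.sum_nonneg fun i _ => Finset.sum_nonneg fun j' hj' => hdhat i j' hj'
  have hAmnn : 0 ≤ Am := Finset.sum_nonneg fun jj _ => norm_nonneg _
  have hlle : ∀ i, ∀ q ∈ B i, lhat i q ≤ Lmax := by
    intro i q hq
    calc lhat i q ≤ ∑ q' ∈ B i, lhat i q' :=
          Finset.single_le_sum (fun q' hq' => hlhat i q' hq') hq
      _ ≤ Lmax := Finset.single_le_sum
          (fun i' _ => Finset.sum_nonneg fun q' hq' => hlhat i' q' hq') (Finset.mem_univ i)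
  have hdle : ∀ i, ∀ j' ∈ A i, dhat i j' ≤ D0 := by
    intro i j' hj'
    calc dhat i j' ≤ ∑ j'' ∈ A i, dhat i j'' :=
          Finset.single_le_sum (fun j'' hj'' => hdhat i j'' hj'') hj'
      _ ≤ D0 := Finset.single_le_sum
          (fun i' _ => Finset.sum_nonneg fun j'' hj'' => hdhat i' j'' hj'') (Finset.mem_univ i)
  have hale : ∀ jj : J, ‖a jj‖ ≤ Am := fun jj =>
    Finset.single_le_sum (fun j'' _ => norm_nonneg (a j'')) (Finset.mem_univ jj)
  have main : ∀ x : Fin n → EuclideanSpace ℝ (Fin d),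
      ‖x‖ ≤ Am + D0 + (N : ℝ) * Lmax + (N : ℝ) * Real.sqrt (2 * F x) := by
    intro x
    set S := Real.sqrt (2 * F x) with hSdef
    have hSnn : 0 ≤ S := Real.sqrt_nonneg _
    have hbound : ∀ i : Fin n, ‖x i‖ ≤ Am + D0 + (N : ℝ) * Lmax + (N : ℝ) * S := by
      intro i
      have chain : ∀ t, t ≤ r i → ‖x i‖ ≤ ‖x (c i t)‖ + t * (Lmax + S) := by
        intro t
        induction t with
        | zero => intro _; simp [hc0 i]
        | succ t ih =>
          intro ht
          have htlt : t < r i := ht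
          have h1 := ih (Nat.le_of_succ_le ht)
          have hstep := hcstep i t htlt
          have h2 : ‖x (c i t)‖ ≤ ‖x (c i (t + 1))‖ + ‖x (c i t) - x (c i (t + 1))‖ := by
            have := norm_sub_norm_le (x (c i t)) (x (c i (t + 1)))
            linarith
          have h3 : ‖x (c i t) - x (c i (t + 1))‖ ≤ Lmax + S := by
            have hb := hdistB x (c i t) (c i (t + 1)) hstep
            have hl := hlle (c i t) (c i (t + 1)) hstep
            linarith
          push_cast
          linarith
      have hfin := chain (r i) le_rfl
      have h4 : ‖x (c i (r i))‖ ≤ Am + D0 + S := by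
        have h5 := hdistA x (c i (r i)) (j i) (hj i)
        have h6 : ‖x (c i (r i))‖ ≤ ‖a (j i)‖ + ‖x (c i (r i)) - a (j i)‖ := by
          have := norm_sub_norm_le (x (c i (r i))) (a (j i))
          linarith
        have h7 := hale (j i)
        have h8 := hdle (c i (r i)) (j i) (hj i)
        linarith
      have hrN : (r i : ℝ) ≤ (N : ℝ) - 1 := by
        have h9 : r i ≤ Finset.univ.sup r := Finset.le_sup (Finset.mem_univ i)
        have h10 : (r i : ℝ) ≤ ((Finset.univ.sup r : ℕ) : ℝ) := by exact_mod_cast h9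
        have : ((N : ℕ) : ℝ) = ((Finset.univ.sup r : ℕ) : ℝ) + 1 := by
          rw [hN]; push_cast; ring
        linarith
      nlinarith [hfin, h4, hrN, hLnn, hSnn]
    refine (pi_norm_le_iff_of_nonneg ?_).2 hbound
    positivity
  rw [tendsto_atTop]
  intro M
  have hM0 : (0 : ℝ) ≤ max M 0 := le_max_right _ _
  have hNpos : (0 : ℝ) < (N : ℝ) := by
    have : 0 < N := Nat.succ_pos _
    exact_mod_cast this
  filter_upwards [tendsto_norm_cobounded_atTop.eventually_ge_atTop
    (Am + D0 + (N : ℝ) * Lmax + (N : ℝ) * Real.sqrt (2 * max M 0))] with x hx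
  have h1 := main x
  have h2 : (N : ℝ) * Real.sqrt (2 * max M 0) ≤ (N : ℝ) * Real.sqrt (2 * F x) := by
    linarith
  have h3 : Real.sqrt (2 * max M 0) ≤ Real.sqrt (2 * F x) :=
    le_of_mul_le_mul_left h2 hNpos
  have h4 : 2 * max M 0 ≤ 2 * F x :=
    (Real.sqrt_le_sqrt_iff (by nlinarith [hFnn x, hM0])).1 h3
  have h5 : M ≤ max M 0 := le_max_left _ _
  linarith
end

section
/- Under the connectivity assumption, for any x⁰ ∈ (ℝ^d)^n the level set S = {x ∈ (ℝ^d)^n : f(x) ≤ f(x⁰)} is bounded. -/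
open Finset Filter

theorem stmt5 (d n : ℕ) (hd : 1 ≤ d) (hn : 1 ≤ n) {J : Type*} [Fintype J]
    (a : J → EuclideanSpace ℝ (Fin d))
    (A : Fin n → Finset J) (dhat : Fin n → J → ℝ)
    (B : Fin n → Finset (Fin n)) (lhat : Fin n → Fin n → ℝ)
    (hdhat : ∀ i, ∀ j ∈ A i, 0 ≤ dhat i j)
    (hlhat : ∀ i, ∀ q ∈ B i, 0 ≤ lhat i q)
    (hBirr : ∀ i : Fin n, i ∉ B i)
    (hBsymm : ∀ i q : Fin n, q ∈ B i ↔ i ∈ B q)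
    (hlsymm : ∀ i q : Fin n, lhat i q = lhat q i)
    (hconn : ∀ i : Fin n, ∃ (r : ℕ) (c : ℕ → Fin n), c 0 = i ∧
      (∀ t, t < r → c (t + 1) ∈ B (c t)) ∧ (A (c r)).Nonempty)
    (x0 : Fin n → EuclideanSpace ℝ (Fin d)) :
    Bornology.IsBounded
      {x : Fin n → EuclideanSpace ℝ (Fin d) | obj a A dhat B lhat x ≤ obj a A dhat B lhat x0} := by
  classical
  set M : ℝ := obj a A dhat B lhat x0 with hM
  -- generic decomposition of obj
  have hobj : ∀ x : Fin n → EuclideanSpace ℝ (Fin d),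
      obj a A dhat B lhat x
        = (∑ i, ∑ j ∈ A i, max (‖x i - a j‖ - dhat i j) 0 ^ 2)
          + (1 / 2) * ∑ i, ∑ q ∈ B i, max (‖x i - x q‖ - lhat i q) 0 ^ 2 := fun _ => rfl
  -- constants
  set Ka : ℝ := ∑ j : J, ‖a j‖ with hKa
  set Kd : ℝ := ∑ i, ∑ j ∈ A i, |dhat i j| with hKd
  set Kl : ℝ := ∑ i, ∑ q ∈ B i, |lhat i q| with hKl
  have hKa0 : 0 ≤ Ka := Finset.sum_nonneg fun _ _ => norm_nonneg _
  have hKd0 : 0 ≤ Kd :=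
    Finset.sum_nonneg fun _ _ => Finset.sum_nonneg fun _ _ => abs_nonneg _
  have hKl0 : 0 ≤ Kl :=
    Finset.sum_nonneg fun _ _ => Finset.sum_nonneg fun _ _ => abs_nonneg _
  have hdK : ∀ i, ∀ j ∈ A i, dhat i j ≤ Kd := by
    intro i j hj
    calc dhat i j ≤ |dhat i j| := le_abs_self _
      _ ≤ ∑ j' ∈ A i, |dhat i j'| :=
        Finset.single_le_sum (f := fun j' => |dhat i j'|) (fun _ _ => abs_nonneg _) hj
      _ ≤ Kd := Finset.single_le_sum
        (f := fun i' => ∑ j' ∈ A i', |dhat i' j'|)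
        (fun _ _ => Finset.sum_nonneg fun _ _ => abs_nonneg _) (Finset.mem_univ i)
  have hlK : ∀ i, ∀ q ∈ B i, lhat i q ≤ Kl := by
    intro i q hq
    calc lhat i q ≤ |lhat i q| := le_abs_self _
      _ ≤ ∑ q' ∈ B i, |lhat i q'| :=
        Finset.single_le_sum (f := fun q' => |lhat i q'|) (fun _ _ => abs_nonneg _) hq
      _ ≤ Kl := Finset.single_le_sum
        (f := fun i' => ∑ q' ∈ B i', |lhat i' q'|)
        (fun _ _ => Finset.sum_nonneg fun _ _ => abs_nonneg _) (Finset.mem_univ i)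
  have haK : ∀ j : J, ‖a j‖ ≤ Ka := fun j =>
    Finset.single_le_sum (fun _ _ => norm_nonneg _) (Finset.mem_univ j)
  -- bounds from objective
  have key1 : ∀ x : Fin n → EuclideanSpace ℝ (Fin d), obj a A dhat B lhat x ≤ M →
      ∀ i, ∀ j ∈ A i, ‖x i - a j‖ ≤ dhat i j + Real.sqrt M := by
    intro x hx i j hj
    have h1 : max (‖x i - a j‖ - dhat i j) 0 ^ 2
        ≤ ∑ j' ∈ A i, max (‖x i - a j'‖ - dhat i j') 0 ^ 2 :=
      Finset.single_le_sum (f := fun j' => max (‖x i - a j'‖ - dhat i j') 0 ^ 2)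
        (fun _ _ => by positivity) hj
    have h2 : (∑ j' ∈ A i, max (‖x i - a j'‖ - dhat i j') 0 ^ 2)
        ≤ ∑ i', ∑ j' ∈ A i', max (‖x i' - a j'‖ - dhat i' j') 0 ^ 2 :=
      Finset.single_le_sum
        (f := fun i' => ∑ j' ∈ A i', max (‖x i' - a j'‖ - dhat i' j') 0 ^ 2)
        (fun _ _ => Finset.sum_nonneg fun _ _ => by positivity) (Finset.mem_univ i)
    have h3 : 0 ≤ (1 / 2 : ℝ) * ∑ i', ∑ q ∈ B i', max (‖x i' - x q‖ - lhat i' q) 0 ^ 2 := by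
      positivity
    rw [hobj x] at hx
    have hsq : max (‖x i - a j‖ - dhat i j) 0 ^ 2 ≤ M := by linarith
    have hle : max (‖x i - a j‖ - dhat i j) 0 ≤ Real.sqrt M := by
      have := Real.sqrt_le_sqrt hsq
      rwa [Real.sqrt_sq (le_max_right _ _)] at this
    have := le_trans (le_max_left (‖x i - a j‖ - dhat i j) 0) hle
    linarith
  have key2 : ∀ x : Fin n → EuclideanSpace ℝ (Fin d), obj a A dhat B lhat x ≤ M →
      ∀ i, ∀ q ∈ B i, ‖x i - x q‖ ≤ lhat i q + Real.sqrt (2 * M) := by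
    intro x hx i q hq
    have h1 : max (‖x i - x q‖ - lhat i q) 0 ^ 2
        ≤ ∑ q' ∈ B i, max (‖x i - x q'‖ - lhat i q') 0 ^ 2 :=
      Finset.single_le_sum (f := fun q' => max (‖x i - x q'‖ - lhat i q') 0 ^ 2)
        (fun _ _ => by positivity) hq
    have h2 : (∑ q' ∈ B i, max (‖x i - x q'‖ - lhat i q') 0 ^ 2)
        ≤ ∑ i', ∑ q' ∈ B i', max (‖x i' - x q'‖ - lhat i' q') 0 ^ 2 :=
      Finset.single_le_sum
        (f := fun i' => ∑ q' ∈ B i', max (‖x i' - x q'‖ - lhat i' q') 0 ^ 2)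
        (fun _ _ => Finset.sum_nonneg fun _ _ => by positivity) (Finset.mem_univ i)
    have h3 : 0 ≤ ∑ i', ∑ j' ∈ A i', max (‖x i' - a j'‖ - dhat i' j') 0 ^ 2 := by
      positivity
    rw [hobj x] at hx
    have hsq : max (‖x i - x q‖ - lhat i q) 0 ^ 2 ≤ 2 * M := by linarith
    have hle : max (‖x i - x q‖ - lhat i q) 0 ≤ Real.sqrt (2 * M) := by
      have := Real.sqrt_le_sqrt hsq
      rwa [Real.sqrt_sq (le_max_right _ _)] at this
    have := le_trans (le_max_left (‖x i - x q‖ - lhat i q) 0) hle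
    linarith
  set base : ℝ := Ka + Kd + Real.sqrt M with hbase
  set link : ℝ := Kl + Real.sqrt (2 * M) with hlink
  have hlink0 : 0 ≤ link := add_nonneg hKl0 (Real.sqrt_nonneg _)
  have hbase0 : 0 ≤ base := by
    have := Real.sqrt_nonneg M; simp only [hbase]; linarith
  -- chain bound
  have chain : ∀ x : Fin n → EuclideanSpace ℝ (Fin d), obj a A dhat B lhat x ≤ M →
      ∀ r : ℕ, ∀ c : ℕ → Fin n, (∀ t, t < r → c (t + 1) ∈ B (c t)) → (A (c r)).Nonempty →
      ‖x (c 0)‖ ≤ base + r * link := by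
    intro x hx r
    induction r with
    | zero =>
      intro c _ hA
      obtain ⟨j, hj⟩ := hA
      have h1 := key1 x hx (c 0) j hj
      have h2 : ‖x (c 0)‖ ≤ ‖x (c 0) - a j‖ + ‖a j‖ := by
        have := norm_add_le (x (c 0) - a j) (a j)
        simpa using this
      have h3 := haK j
      have h4 := hdK (c 0) j hj
      simp only [Nat.cast_zero, zero_mul, add_zero, hbase]
      linarith
    | succ r ih =>
      intro c hc hA
      have h1 : ‖x (c 1)‖ ≤ base + r * link := by
        refine ih (fun t => c (t + 1)) (fun t ht => hc (t + 1) (by omega)) ?_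
        simpa using hA
      have hq : c 1 ∈ B (c 0) := hc 0 (Nat.succ_pos r)
      have h2 : ‖x (c 0) - x (c 1)‖ ≤ link := by
        have := key2 x hx (c 0) (c 1) hq
        have := hlK (c 0) (c 1) hq
        simp only [hlink]; linarith
      have h3 : ‖x (c 0)‖ ≤ ‖x (c 1)‖ + ‖x (c 0) - x (c 1)‖ := by
        have := norm_add_le (x (c 1)) (x (c 0) - x (c 1))
        simpa using this
      have : ‖x (c 0)‖ ≤ base + r * link + link := by linarith
      calc ‖x (c 0)‖ ≤ base + r * link + link := this
        _ = base + (r + 1 : ℕ) * link := by push_cast; ring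
  -- uniform bound over all targets
  set rOf : Fin n → ℕ := fun i => (hconn i).choose with hrOf
  set N : ℕ := Finset.univ.sup rOf with hN
  set R : ℝ := base + N * link with hR
  have hR0 : 0 ≤ R := by
    have : 0 ≤ (N : ℝ) * link := mul_nonneg (Nat.cast_nonneg _) hlink0
    simp only [hR]; linarith
  have hxiR : ∀ x : Fin n → EuclideanSpace ℝ (Fin d), obj a A dhat B lhat x ≤ M →
      ∀ i, ‖x i‖ ≤ R := by
    intro x hx i
    obtain ⟨c, hc0, hcl, hcA⟩ := (hconn i).choose_spec
    have h1 : ‖x (c 0)‖ ≤ base + rOf i * link := chain x hx (rOf i) c hcl hcA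
    have h2 : (rOf i : ℝ) * link ≤ (N : ℝ) * link := by
      have : rOf i ≤ N := Finset.le_sup (Finset.mem_univ i)
      exact mul_le_mul_of_nonneg_right (by exact_mod_cast this) hlink0
    rw [hc0] at h1
    simp only [hR]; linarith
  -- conclude boundedness
  have hsub : {x : Fin n → EuclideanSpace ℝ (Fin d) | obj a A dhat B lhat x ≤ M}
      ⊆ Metric.closedBall 0 R := by
    intro x hx
    rw [Metric.mem_closedBall, dist_zero_right]
    exact (pi_norm_le_iff_of_nonneg hR0).2 (hxiR x hx)
  exact (Metric.isBounded_closedBall).subset hsub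
end

section
/- (Main convergence theorem) Under the connectivity assumption, let {x^k} be any sequence generated by the algorithm. Then every limit point x* of {x^k} is a global minimizer of f (equivalently, ∇f(x*) = 0), and the sequence of function values f(x^k) converges to the minimum value f* = min_{x ∈ (ℝ^d)^n} f(x). -/
open Finset Filter

/-- The Coop. PPM algorithm: `X (k+1)` is obtained from `X k` by updating the
blocks successively for `i = 1, …, n`. -/
def IsPPM {d n : ℕ} {J : Type*} (a : J → EuclideanSpace ℝ (Fin d))
    (A : Fin n → Finset J) (dhat : Fin n → J → ℝ)
    (B : Fin n → Finset (Fin n)) (lhat : Fin n → Fin n → ℝ)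
    (X : ℕ → Fin n → EuclideanSpace ℝ (Fin d)) : Prop :=
  ∀ (k : ℕ) (i : Fin n),
    X (k + 1) i = (1 / 2 : ℝ) • X k i
      + (1 / (2 * (((A i).card : ℝ) + ((B i).card : ℝ)))) •
        ((∑ j ∈ A i, projBall (a j) (dhat i j) (X k i))
          + ∑ q ∈ B i, projBall (if q < i then X (k + 1) q else X k q) (lhat i q) (X k i))

/-!
The objective is a sum of squared distances `φ` to balls, and `∇φ z = 2 (z - P z)` with `P` the
projection onto the ball. Firm nonexpansiveness of `P` gives
`0 ≤ φ w - φ v - ⟪∇φ v, w - v⟫ ≤ ‖w - v‖²` and makes `∇φ` Lipschitz; summing over the terms,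
the objective is convex, has uniformly continuous block gradients and a separable quadratic
majorant with constants `|Aᵢ| + 2|Bᵢ|`. Coop. PPM is exactly cyclic block gradient descent with
steps `1 / (4 (|Aᵢ| + |Bᵢ|))`, so every block step decreases the objective by a fixed multiple
of the squared block gradient. Hence the values converge, the block gradients at the
intermediate points and the steps tend to `0`, and therefore so do the gradients at the
iterates. Connectivity makes the sublevel sets bounded, so the iterates stay bounded, and the
gradient inequality then identifies the limit of the values with the infimum.
-/

open scoped RealInnerProductSpace Topology Uniformity

section BallResidual

variable {F : Type*} [NormedAddCommGroup F] [InnerProductSpace ℝ F] {r : ℝ} {v w : F}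

/-- `v - ballResidual r v` is the projection of `v` onto the closed ball of radius `r` about `0`,
and `2 • ballResidual r v` is the gradient of the squared distance to that ball. -/
noncomputable def ballResidual (r : ℝ) (v : F) : F := (max (‖v‖ - r) 0 / ‖v‖) • v

noncomputable def ballBregman (r : ℝ) (v w : F) : ℝ :=
  max (‖w‖ - r) 0 ^ 2 - max (‖v‖ - r) 0 ^ 2 - 2 * ⟪ballResidual r v, w - v⟫

lemma ballResidual_of_norm_le (h : ‖v‖ ≤ r) : ballResidual r v = 0 := by
  simp [ballResidual, max_eq_right (sub_nonpos.2 h)]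

lemma ballResidual_of_lt_norm (h : r < ‖v‖) : ballResidual r v = (1 - r / ‖v‖) • v := by
  rcases eq_or_ne v 0 with rfl | hv
  · simp [ballResidual]
  · rw [ballResidual, max_eq_left (sub_nonneg.2 h.le), sub_div, div_self (norm_ne_zero_iff.2 hv)]

lemma ballResidual_neg (r : ℝ) (v : F) : ballResidual r (-v) = -ballResidual r v := by
  simp [ballResidual]

lemma norm_ballResidual (hr : 0 ≤ r) (v : F) : ‖ballResidual r v‖ = max (‖v‖ - r) 0 := by
  rcases le_or_gt ‖v‖ r with h | h
  · simp [ballResidual_of_norm_le h, max_eq_right (sub_nonpos.2 h)]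
  · have hv : 0 < ‖v‖ := hr.trans_lt h
    rw [ballResidual_of_lt_norm h, norm_smul, Real.norm_of_nonneg, max_eq_left (by linarith)]
    · field_simp
    · rw [sub_nonneg, div_le_one hv]; exact h.le

lemma norm_sub_ballResidual_le (hr : 0 ≤ r) (v : F) : ‖v - ballResidual r v‖ ≤ r := by
  rcases le_or_gt ‖v‖ r with h | h
  · simpa [ballResidual_of_norm_le h] using h
  · have hv : 0 < ‖v‖ := hr.trans_lt h
    rw [ballResidual_of_lt_norm h, ← one_smul ℝ v, smul_smul, ← sub_smul, mul_one, one_smul,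
      sub_sub_cancel, norm_smul, Real.norm_of_nonneg (div_nonneg hr hv.le),
      div_mul_cancel₀ _ hv.ne']

lemma inner_ballResidual_sub_nonpos (hr : 0 ≤ r) (v : F) {c : F} (hc : ‖c‖ ≤ r) :
    ⟪ballResidual r v, c - (v - ballResidual r v)⟫ ≤ 0 := by
  rcases le_or_gt ‖v‖ r with h | h
  · simp [ballResidual_of_norm_le h]
  · have hv : 0 < ‖v‖ := hr.trans_lt h
    have hcoef : 0 ≤ 1 - r / ‖v‖ := by rw [sub_nonneg, div_le_one hv]; exact h.le
    have hvc : ⟪v, c⟫ ≤ ‖v‖ * r := (real_inner_le_norm v c).trans (by gcongr)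
    have hP : v - (1 - r / ‖v‖) • v = (r / ‖v‖) • v := by module
    rw [ballResidual_of_lt_norm h, hP, real_inner_smul_left, inner_sub_right, real_inner_smul_right,
      real_inner_self_eq_norm_sq]
    refine mul_nonpos_of_nonneg_of_nonpos hcoef ?_
    have : r / ‖v‖ * ‖v‖ ^ 2 = ‖v‖ * r := by field_simp
    linarith

lemma lipschitzWith_ballResidual (hr : 0 ≤ r) : LipschitzWith 1 (ballResidual (F := F) r) := by
  refine LipschitzWith.of_dist_le_mul fun v w => ?_
  rw [NNReal.coe_one, one_mul, dist_eq_norm, dist_eq_norm]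
  set u := ballResidual r v
  set u' := ballResidual r w
  have h₁ := inner_ballResidual_sub_nonpos hr v (norm_sub_ballResidual_le hr w)
  have h₂ := inner_ballResidual_sub_nonpos hr w (norm_sub_ballResidual_le hr v)
  have hfirm : ‖u - u'‖ ^ 2 ≤ ⟪u - u', v - w⟫ := by
    have : ⟪u - u', v - w⟫
        = ‖u - u'‖ ^ 2 - ⟪u, (w - u') - (v - u)⟫ - ⟪u', (v - u) - (w - u')⟫ := by
      rw [← real_inner_self_eq_norm_sq]
      simp only [inner_sub_left, inner_sub_right, real_inner_comm u u']
      ring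
    linarith
  have := hfirm.trans (real_inner_le_norm _ _)
  nlinarith [norm_nonneg (u - u'), norm_nonneg (v - w)]

lemma ballBregman_nonneg (hr : 0 ≤ r) (v w : F) : 0 ≤ ballBregman r v w := by
  have h := inner_ballResidual_sub_nonpos hr v (norm_sub_ballResidual_le hr w)
  have : ballBregman r v w = ‖ballResidual r w - ballResidual r v‖ ^ 2
      - 2 * ⟪ballResidual r v, (w - ballResidual r w) - (v - ballResidual r v)⟫ := by
    rw [ballBregman, ← norm_ballResidual hr, ← norm_ballResidual hr, norm_sub_sq_real]
    simp only [inner_sub_right, real_inner_self_eq_norm_sq, real_inner_comm (ballResidual r v)]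
    ring
  rw [this]
  nlinarith [sq_nonneg ‖ballResidual r w - ballResidual r v‖]

lemma ballBregman_le (hr : 0 ≤ r) (v w : F) : ballBregman r v w ≤ ‖w - v‖ ^ 2 := by
  have hw : max (‖w‖ - r) 0 ≤ ‖ballResidual r v + (w - v)‖ := by
    refine max_le ?_ (norm_nonneg _)
    have : ballResidual r v + (w - v) = w - (v - ballResidual r v) := by abel
    rw [this]
    linarith [norm_sub_norm_le w (v - ballResidual r v), norm_sub_ballResidual_le hr v]
  have := pow_le_pow_left₀ (le_max_right _ _) hw 2
  rw [norm_add_sq_real] at this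
  rw [ballBregman, ← norm_ballResidual hr v]
  linarith

lemma sub_projBall {d : ℕ} (a z : EuclideanSpace ℝ (Fin d)) (r : ℝ) :
    z - projBall a r z = ballResidual r (z - a) := by
  unfold projBall
  split_ifs with h
  · rw [sub_self, ballResidual_of_norm_le h]
  · rw [ballResidual_of_lt_norm (not_le.1 h)]
    module

end BallResidual

section CyclicBlockDescent

open Function

variable {E : Type*} {n : ℕ}

lemma abs_sum_inner_le [NormedAddCommGroup E] [InnerProductSpace ℝ E] {ι : Type*} [Fintype ι]
    (v w : ι → E) :
    |∑ i, ⟪v i, w i⟫| ≤ (∑ i, ‖v i‖) * ‖w‖ := by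
  rw [sum_mul]
  refine (abs_sum_le_sum_abs _ _).trans (sum_le_sum fun i _ => ?_)
  exact (abs_real_inner_le_norm _ _).trans (by gcongr; exact norm_le_pi_norm w i)

lemma eq_of_mapClusterPt_of_tendsto_comp {α : Type*} [TopologicalSpace α] {f : α → ℝ}
    {u : ℕ → α} {p : α} {L : ℝ} (hf : Continuous f) (hL : Tendsto (f ∘ u) atTop (𝓝 L))
    (hp : MapClusterPt p atTop u) : f p = L :=
  eq_of_nhds_neBot ((hp.continuousAt_comp hf.continuousAt).clusterPt.mono hL)

lemma ciInf_eq_of_tendsto_comp {α : Type*} {f : α → ℝ} {u : ℕ → α} {L : ℝ}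
    (hL : Tendsto (f ∘ u) atTop (𝓝 L)) (hmin : ∀ y, L ≤ f y) : ⨅ y, f y = L := by
  have : Nonempty α := ⟨u 0⟩
  exact le_antisymm (ge_of_tendsto' hL fun k => ciInf_le ⟨L, Set.forall_mem_range.2 hmin⟩ _)
    (le_ciInf hmin)

/-- The point reached in sweep `k` of a Gauss–Seidel scheme once the blocks `q < m` have been
updated. -/
def sweepPoint (X : ℕ → Fin n → E) (k m : ℕ) : Fin n → E :=
  fun q => if (q : ℕ) < m then X (k + 1) q else X k q

variable {X : ℕ → Fin n → E} {k m : ℕ}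

lemma sweepPoint_zero : sweepPoint X k 0 = X k := by
  funext q
  simp [sweepPoint]

lemma sweepPoint_of_le (h : n ≤ m) : sweepPoint X k m = X (k + 1) :=
  funext fun q => if_pos (q.2.trans_le h)

lemma sweepPoint_apply_self (i : Fin n) : sweepPoint X k i i = X k i :=
  if_neg (lt_irrefl _)

lemma sweepPoint_succ (i : Fin n) :
    sweepPoint X k (i + 1) = update (sweepPoint X k i) i (X (k + 1) i) := by
  funext q
  rcases eq_or_ne q i with rfl | hq
  · simp [sweepPoint]
  · have : (q : ℕ) < i + 1 ↔ (q : ℕ) < i := by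
      have := Fin.val_ne_of_ne hq
      omega
    simp only [sweepPoint, update_of_ne hq, this]

lemma norm_sweepPoint_sub_le [SeminormedAddGroup E] :
    ‖sweepPoint X k m - X k‖ ≤ ‖X (k + 1) - X k‖ := by
  refine (pi_norm_le_iff_of_nonneg (norm_nonneg _)).2 fun q => ?_
  by_cases h : (q : ℕ) < m
  · simpa [sweepPoint, h] using norm_le_pi_norm (X (k + 1) - X k) q
  · simp [sweepPoint, h]

variable [NormedAddCommGroup E] [InnerProductSpace ℝ E]

def IsCyclicBlockGradientSeq (g : Fin n → (Fin n → E) → E) (τ : Fin n → ℝ)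
    (X : ℕ → Fin n → E) : Prop :=
  ∀ k i, X (k + 1) i = X k i - τ i • g i (sweepPoint X k i)

def HasSeparableQuadraticMajorant (f : (Fin n → E) → ℝ) (g : Fin n → (Fin n → E) → E)
    (M : Fin n → ℝ) : Prop :=
  ∀ x y, f y ≤ f x + ∑ i, ⟪g i x, y i - x i⟫ + ∑ i, M i * ‖y i - x i‖ ^ 2

variable {f : (Fin n → E) → ℝ} {g : Fin n → (Fin n → E) → E} {M τ : Fin n → ℝ}

lemma sub_sum_norm_mul_le (hconv : ∀ x y, f x + ∑ i, ⟪g i x, y i - x i⟫ ≤ f y)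
    (x y : Fin n → E) : f x - (∑ i, ‖g i x‖) * ‖y - x‖ ≤ f y := by
  have := abs_sum_inner_le (fun i => g i x) (y - x)
  simp only [Pi.sub_apply] at this
  linarith [hconv x y, neg_abs_le (∑ i, ⟪g i x, y i - x i⟫)]

lemma le_of_tendsto_of_tendsto_grad_zero (hconv : ∀ x y, f x + ∑ i, ⟪g i x, y i - x i⟫ ≤ f y)
    {R L : ℝ} (hR : ∀ k, ‖X k‖ ≤ R) (hL : Tendsto (f ∘ X) atTop (𝓝 L))
    (hg : ∀ i, Tendsto (fun k => g i (X k)) atTop (𝓝 0)) (y : Fin n → E) : L ≤ f y := by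
  have hG : Tendsto (fun k => (∑ i, ‖g i (X k)‖) * (‖y‖ + R)) atTop (𝓝 0) := by
    simpa using (tendsto_finsetSum _ fun i _ => (hg i).norm).mul_const (‖y‖ + R)
  refine le_of_tendsto' (by simpa using hL.sub hG) fun k => ?_
  have hdist : ‖y - X k‖ ≤ ‖y‖ + R := (norm_sub_le _ _).trans (by linarith [hR k])
  have hG0 : 0 ≤ ∑ i, ‖g i (X k)‖ := sum_nonneg fun i _ => norm_nonneg _
  have := sub_sum_norm_mul_le hconv (X k) y
  nlinarith

lemma HasSeparableQuadraticMajorant.update_le (hsmooth : HasSeparableQuadraticMajorant f g M)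
    (x : Fin n → E) (i : Fin n) (z : E) :
    f (update x i z) ≤ f x + ⟪g i x, z - x i⟫ + M i * ‖z - x i‖ ^ 2 := by
  have h := hsmooth x (update x i z)
  rwa [sum_eq_single i (fun q _ hq => by simp [update_of_ne hq]) (by simp),
    sum_eq_single i (fun q _ hq => by simp [update_of_ne hq]) (by simp), update_self] at h

namespace IsCyclicBlockGradientSeq

lemma sweepPoint_succ_add_le (hX : IsCyclicBlockGradientSeq g τ X)
    (hsmooth : HasSeparableQuadraticMajorant f g M) (k : ℕ) (i : Fin n) :
    f (sweepPoint X k (i + 1)) + τ i * (1 - τ i * M i) * ‖g i (sweepPoint X k i)‖ ^ 2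
      ≤ f (sweepPoint X k i) := by
  have hstep : X (k + 1) i - sweepPoint X k i i = -(τ i • g i (sweepPoint X k i)) := by
    rw [sweepPoint_apply_self, hX]
    abel
  have h := hsmooth.update_le (sweepPoint X k i) i (X (k + 1) i)
  rw [← sweepPoint_succ, hstep, inner_neg_right, real_inner_smul_right, real_inner_self_eq_norm_sq,
    norm_neg, norm_smul, mul_pow, Real.norm_eq_abs, sq_abs] at h
  linarith

lemma antitone_sweepPoint (hX : IsCyclicBlockGradientSeq g τ X)
    (hsmooth : HasSeparableQuadraticMajorant f g M) (hτ : ∀ i, 0 < τ i)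
    (hτM : ∀ i, τ i * M i < 1) (k : ℕ) : Antitone fun m => f (sweepPoint X k m) := by
  refine antitone_nat_of_succ_le fun m => ?_
  by_cases hm : m < n
  · have hdec := hX.sweepPoint_succ_add_le hsmooth k ⟨m, hm⟩
    have : 0 ≤ τ ⟨m, hm⟩ * (1 - τ ⟨m, hm⟩ * M ⟨m, hm⟩) :=
      mul_nonneg (hτ _).le (sub_nonneg.2 (hτM _).le)
    nlinarith [sq_nonneg ‖g ⟨m, hm⟩ (sweepPoint X k m)‖]
  · rw [sweepPoint_of_le (by omega), sweepPoint_of_le (by omega)]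

lemma succ_add_le (hX : IsCyclicBlockGradientSeq g τ X)
    (hsmooth : HasSeparableQuadraticMajorant f g M) (hτ : ∀ i, 0 < τ i)
    (hτM : ∀ i, τ i * M i < 1) (k : ℕ) (i : Fin n) :
    f (X (k + 1)) + τ i * (1 - τ i * M i) * ‖g i (sweepPoint X k i)‖ ^ 2 ≤ f (X k) := by
  have hanti := hX.antitone_sweepPoint hsmooth hτ hτM k
  have h₁ : f (X (k + 1)) ≤ f (sweepPoint X k (i + 1)) := by
    simpa only [sweepPoint_of_le le_rfl] using hanti i.2
  have h₂ : f (sweepPoint X k i) ≤ f (X k) := by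
    simpa only [sweepPoint_zero] using hanti (Nat.zero_le i)
  linarith [hX.sweepPoint_succ_add_le hsmooth k i]

lemma antitone_comp (hX : IsCyclicBlockGradientSeq g τ X)
    (hsmooth : HasSeparableQuadraticMajorant f g M) (hτ : ∀ i, 0 < τ i)
    (hτM : ∀ i, τ i * M i < 1) : Antitone (f ∘ X) := by
  refine antitone_nat_of_succ_le fun k => ?_
  simpa only [Function.comp, sweepPoint_zero, sweepPoint_of_le le_rfl]
    using hX.antitone_sweepPoint hsmooth hτ hτM k (Nat.zero_le n)

lemma tendsto_grad_sweepPoint_zero (hX : IsCyclicBlockGradientSeq g τ X)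
    (hsmooth : HasSeparableQuadraticMajorant f g M) (hτ : ∀ i, 0 < τ i)
    (hτM : ∀ i, τ i * M i < 1)
    (hbdd : BddBelow (Set.range (f ∘ X))) (i : Fin n) :
    Tendsto (fun k => g i (sweepPoint X k i)) atTop (𝓝 0) := by
  have hc : 0 < τ i * (1 - τ i * M i) := mul_pos (hτ i) (sub_pos.2 (hτM i))
  have hL := tendsto_atTop_ciInf (hX.antitone_comp hsmooth hτ hτM) hbdd
  have hdiff : Tendsto (fun k => f (X k) - f (X (k + 1))) atTop (𝓝 0) := by
    simpa using hL.sub (hL.comp (tendsto_add_atTop_nat 1))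
  rw [tendsto_zero_iff_norm_tendsto_zero]
  refine squeeze_zero (fun k => norm_nonneg _) (fun k => ?_)
    (by simpa using (hdiff.div_const (τ i * (1 - τ i * M i))).sqrt)
  refine Real.le_sqrt_of_sq_le ?_
  rw [le_div_iff₀ hc]
  linarith [hX.succ_add_le hsmooth hτ hτM k i]

lemma tendsto_succ_sub_zero (hX : IsCyclicBlockGradientSeq g τ X)
    (hsmooth : HasSeparableQuadraticMajorant f g M) (hτ : ∀ i, 0 < τ i)
    (hτM : ∀ i, τ i * M i < 1)
    (hbdd : BddBelow (Set.range (f ∘ X))) :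
    Tendsto (fun k => X (k + 1) - X k) atTop (𝓝 0) :=
  tendsto_pi_nhds.2 fun i => by
    simpa [hX _ i] using
      ((hX.tendsto_grad_sweepPoint_zero hsmooth hτ hτM hbdd i).const_smul (τ i)).neg

lemma tendsto_grad_zero (hX : IsCyclicBlockGradientSeq g τ X)
    (hsmooth : HasSeparableQuadraticMajorant f g M) (hτ : ∀ i, 0 < τ i)
    (hτM : ∀ i, τ i * M i < 1)
    (hbdd : BddBelow (Set.range (f ∘ X))) (hg : ∀ i, UniformContinuous (g i)) (i : Fin n) :
    Tendsto (fun k => g i (X k)) atTop (𝓝 0) := by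
  have hdist : Tendsto (fun k => dist (sweepPoint X k i) (X k)) atTop (𝓝 0) :=
    squeeze_zero (fun k => dist_nonneg)
      (fun k => (dist_eq_norm _ _).trans_le norm_sweepPoint_sub_le)
      (tendsto_zero_iff_norm_tendsto_zero.1 (hX.tendsto_succ_sub_zero hsmooth hτ hτM hbdd))
  have hunif : Tendsto (fun k => (sweepPoint X k i, X k)) atTop (𝓤 (Fin n → E)) :=
    tendsto_uniformity_iff_dist_tendsto_zero.2 hdist
  exact (hX.tendsto_grad_sweepPoint_zero hsmooth hτ hτM hbdd i).congr_dist
    (tendsto_uniformity_iff_dist_tendsto_zero.1 (Tendsto.comp (hg i) hunif))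

theorem isMin_and_tendsto_iInf (hX : IsCyclicBlockGradientSeq g τ X)
    (hsmooth : HasSeparableQuadraticMajorant f g M) (hτ : ∀ i, 0 < τ i)
    (hτM : ∀ i, τ i * M i < 1)
    (hconv : ∀ x y, f x + ∑ i, ⟪g i x, y i - x i⟫ ≤ f y) (hg : ∀ i, UniformContinuous (g i))
    (hf : Continuous f) (hsub : ∀ c, Bornology.IsBounded {x | f x ≤ c}) :
    (∀ p, MapClusterPt p atTop X → ∀ y, f p ≤ f y) ∧ Tendsto (f ∘ X) atTop (𝓝 (⨅ y, f y)) := by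
  have hanti := hX.antitone_comp hsmooth hτ hτM
  obtain ⟨R, hR⟩ : ∃ R, ∀ k, ‖X k‖ ≤ R :=
    (isBounded_iff_forall_norm_le.1 (hsub (f (X 0)))).imp fun R h k => h _ (hanti (Nat.zero_le k))
  have hbdd : BddBelow (Set.range (f ∘ X)) := by
    refine ⟨f 0 - (∑ i, ‖g i 0‖) * R, Set.forall_mem_range.2 fun k => ?_⟩
    have hG0 : 0 ≤ ∑ i, ‖g i 0‖ := sum_nonneg fun i _ => norm_nonneg _
    have := sub_sum_norm_mul_le hconv 0 (X k)
    rw [sub_zero] at this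
    have := mul_le_mul_of_nonneg_left (hR k) hG0
    simp only [Function.comp]
    linarith
  have hL := tendsto_atTop_ciInf hanti hbdd
  have hmin := le_of_tendsto_of_tendsto_grad_zero hconv hR hL
    (hX.tendsto_grad_zero hsmooth hτ hτM hbdd hg)
  rw [ciInf_eq_of_tendsto_comp hL hmin]
  exact ⟨fun p hp y => (eq_of_mapClusterPt_of_tendsto_comp hf hL hp).trans_le (hmin y), hL⟩

end IsCyclicBlockGradientSeq

end CyclicBlockDescent

lemma sum_sum_comm_of_symm {ι M : Type*} [Fintype ι] [AddCommMonoid M] {B : ι → Finset ι}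
    (hB : ∀ i q, q ∈ B i ↔ i ∈ B q) (F : ι → ι → M) :
    ∑ i, ∑ q ∈ B i, F i q = ∑ i, ∑ q ∈ B i, F q i :=
  sum_comm' fun i q => by simp [hB i q]

lemma uniformContinuous_finsetSum {α β ι : Type*} [UniformSpace α] [AddCommGroup β]
    [UniformSpace β] [IsUniformAddGroup β] (s : Finset ι) {f : ι → α → β}
    (hf : ∀ i ∈ s, UniformContinuous (f i)) : UniformContinuous fun x => ∑ i ∈ s, f i x := by
  classical
  induction s using Finset.induction_on with
  | empty => simpa using uniformContinuous_const
  | insert i s hi ih =>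
    simp only [sum_insert hi]
    exact (hf i (mem_insert_self i s)).add (ih fun j hj => hf j (mem_insert_of_mem hj))

lemma le_sum_sum_of_mem {ι κ : Type*} [Fintype ι] {s : ι → Finset κ} {F : ι → κ → ℝ}
    (hF : ∀ i j, 0 ≤ F i j) {i : ι} {j : κ} (hj : j ∈ s i) : F i j ≤ ∑ i, ∑ j ∈ s i, F i j :=
  (single_le_sum (fun j _ => hF i j) hj).trans
    (single_le_sum (f := fun i => ∑ j ∈ s i, F i j) (fun i _ => sum_nonneg fun j _ => hF i j)
      (mem_univ i))

lemma le_add_sqrt_of_sq_max_le {t r C : ℝ} (h : max (t - r) 0 ^ 2 ≤ C) : t ≤ r + √C := by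
  linarith [(le_max_left (t - r) 0).trans ((le_abs_self _).trans (Real.abs_le_sqrt h))]

section Localization

variable {d n : ℕ} {J : Type*} (a : J → EuclideanSpace ℝ (Fin d)) (A : Fin n → Finset J)
  (dhat : Fin n → J → ℝ) (B : Fin n → Finset (Fin n)) (lhat : Fin n → Fin n → ℝ)

/-- The partial gradient of `obj` with respect to `x i`. -/
noncomputable def objGrad (i : Fin n) (x : Fin n → EuclideanSpace ℝ (Fin d)) :
    EuclideanSpace ℝ (Fin d) :=
  (2 : ℝ) • (∑ j ∈ A i, ballResidual (dhat i j) (x i - a j)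
    + ∑ q ∈ B i, ballResidual (lhat i q) (x i - x q))

variable {a A dhat B lhat}

lemma sum_inner_objGrad (hBsymm : ∀ i q, q ∈ B i ↔ i ∈ B q) (hlsymm : ∀ i q, lhat i q = lhat q i)
    (x δ : Fin n → EuclideanSpace ℝ (Fin d)) :
    ∑ i, ⟪objGrad a A dhat B lhat i x, δ i⟫
      = 2 * ∑ i, ∑ j ∈ A i, ⟪ballResidual (dhat i j) (x i - a j), δ i⟫
        + ∑ i, ∑ q ∈ B i, ⟪ballResidual (lhat i q) (x i - x q), δ i - δ q⟫ := by
  have hswap : ∑ i, ∑ q ∈ B i, ⟪ballResidual (lhat i q) (x i - x q), δ q⟫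
      = -∑ i, ∑ q ∈ B i, ⟪ballResidual (lhat i q) (x i - x q), δ i⟫ := by
    rw [sum_sum_comm_of_symm hBsymm, ← sum_neg_distrib]
    refine sum_congr rfl fun i _ => ?_
    rw [← sum_neg_distrib]
    refine sum_congr rfl fun q _ => ?_
    rw [hlsymm q i, ← neg_sub, ballResidual_neg, inner_neg_left]
  simp only [objGrad, real_inner_smul_left, inner_add_left, sum_inner, inner_sub_right,
    sum_sub_distrib, hswap]
  rw [← mul_sum, sum_add_distrib]
  ring

lemma obj_eq_add_sum_inner_objGrad_add (hBsymm : ∀ i q, q ∈ B i ↔ i ∈ B q)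
    (hlsymm : ∀ i q, lhat i q = lhat q i) (x y : Fin n → EuclideanSpace ℝ (Fin d)) :
    obj a A dhat B lhat y = obj a A dhat B lhat x + ∑ i, ⟪objGrad a A dhat B lhat i x, y i - x i⟫
      + (∑ i, ∑ j ∈ A i, ballBregman (dhat i j) (x i - a j) (y i - a j)
        + 1 / 2 * ∑ i, ∑ q ∈ B i, ballBregman (lhat i q) (x i - x q) (y i - y q)) := by
  rw [sum_inner_objGrad hBsymm hlsymm]
  simp only [obj, ballBregman, sub_sub_sub_cancel_right, sub_sub_sub_comm (y _) (y _),
    sum_sub_distrib, ← mul_sum]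
  ring

lemma obj_add_sum_inner_objGrad_le (hdhat : ∀ i, ∀ j ∈ A i, 0 ≤ dhat i j)
    (hlhat : ∀ i, ∀ q ∈ B i, 0 ≤ lhat i q) (hBsymm : ∀ i q, q ∈ B i ↔ i ∈ B q)
    (hlsymm : ∀ i q, lhat i q = lhat q i) (x y : Fin n → EuclideanSpace ℝ (Fin d)) :
    obj a A dhat B lhat x + ∑ i, ⟪objGrad a A dhat B lhat i x, y i - x i⟫
      ≤ obj a A dhat B lhat y := by
  rw [obj_eq_add_sum_inner_objGrad_add hBsymm hlsymm x y, le_add_iff_nonneg_right]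
  exact add_nonneg
    (sum_nonneg fun i _ => sum_nonneg fun j hj => ballBregman_nonneg (hdhat i j hj) _ _)
    (mul_nonneg (by norm_num) (sum_nonneg fun i _ => sum_nonneg fun q hq =>
      ballBregman_nonneg (hlhat i q hq) _ _))

lemma hasSeparableQuadraticMajorant_obj (hdhat : ∀ i, ∀ j ∈ A i, 0 ≤ dhat i j)
    (hlhat : ∀ i, ∀ q ∈ B i, 0 ≤ lhat i q) (hBsymm : ∀ i q, q ∈ B i ↔ i ∈ B q)
    (hlsymm : ∀ i q, lhat i q = lhat q i) :
    HasSeparableQuadraticMajorant (obj a A dhat B lhat) (objGrad a A dhat B lhat)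
      fun i => (A i).card + 2 * (B i).card := by
  intro x y
  have hA : ∑ i, ∑ j ∈ A i, ballBregman (dhat i j) (x i - a j) (y i - a j)
      ≤ ∑ i, (A i).card * ‖y i - x i‖ ^ 2 := by
    refine sum_le_sum fun i _ => ?_
    rw [← nsmul_eq_mul, ← sum_const]
    refine sum_le_sum fun j hj => ?_
    simpa only [sub_sub_sub_cancel_right] using
      ballBregman_le (hdhat i j hj) (x i - a j) (y i - a j)
  -- `‖u - v‖² ≤ 2‖u‖² + 2‖v‖²`, and by symmetry the `v`-terms add up to the `u`-terms
  have hB : ∑ i, ∑ q ∈ B i, ballBregman (lhat i q) (x i - x q) (y i - y q)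
      ≤ ∑ i, 4 * (B i).card * ‖y i - x i‖ ^ 2 := calc
    _ ≤ ∑ i, ∑ q ∈ B i, (2 * ‖y i - x i‖ ^ 2 + 2 * ‖y q - x q‖ ^ 2) := by
      refine sum_le_sum fun i _ => sum_le_sum fun q hq => ?_
      refine (ballBregman_le (hlhat i q hq) _ _).trans ?_
      rw [sub_sub_sub_comm]
      nlinarith [norm_sub_le (y i - x i) (y q - x q), norm_nonneg (y i - x i - (y q - x q)),
        sq_nonneg (‖y i - x i‖ - ‖y q - x q‖)]
    _ = ∑ i, ∑ q ∈ B i, 2 * ‖y i - x i‖ ^ 2 + ∑ i, ∑ q ∈ B i, 2 * ‖y q - x q‖ ^ 2 := by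
      simp only [sum_add_distrib]
    _ = ∑ i, 4 * (B i).card * ‖y i - x i‖ ^ 2 := by
      rw [sum_sum_comm_of_symm hBsymm fun i q => 2 * ‖y q - x q‖ ^ 2, ← sum_add_distrib]
      simp only [sum_const, nsmul_eq_mul]
      exact sum_congr rfl fun i _ => by ring
  have h4 : ∑ i, 4 * ((B i).card : ℝ) * ‖y i - x i‖ ^ 2
      = 2 * ∑ i, 2 * (B i).card * ‖y i - x i‖ ^ 2 := by
    rw [mul_sum]
    exact sum_congr rfl fun i _ => by ring
  rw [obj_eq_add_sum_inner_objGrad_add hBsymm hlsymm x y]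
  simp only [add_mul, sum_add_distrib]
  linarith

lemma continuous_obj : Continuous (obj a A dhat B lhat) := by
  unfold obj
  fun_prop

lemma uniformContinuous_objGrad (hdhat : ∀ i, ∀ j ∈ A i, 0 ≤ dhat i j)
    (hlhat : ∀ i, ∀ q ∈ B i, 0 ≤ lhat i q) (i : Fin n) :
    UniformContinuous (objGrad a A dhat B lhat i) := by
  have hproj (q : Fin n) : UniformContinuous fun x : Fin n → EuclideanSpace ℝ (Fin d) => x q :=
    Pi.uniformContinuous_proj _ q
  refine UniformContinuous.const_smul (UniformContinuous.add ?_ ?_) (2 : ℝ)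
  · exact uniformContinuous_finsetSum _ fun j hj =>
      (lipschitzWith_ballResidual (hdhat i j hj)).uniformContinuous.comp
        ((hproj i).sub uniformContinuous_const)
  · exact uniformContinuous_finsetSum _ fun q hq =>
      (lipschitzWith_ballResidual (hlhat i q hq)).uniformContinuous.comp ((hproj i).sub (hproj q))

lemma norm_le_of_obj_le_of_mem_A {x : Fin n → EuclideanSpace ℝ (Fin d)} {c : ℝ}
    (hx : obj a A dhat B lhat x ≤ c) {i : Fin n} {j : J} (hj : j ∈ A i) :
    ‖x i‖ ≤ ‖a j‖ + (dhat i j + √c) := by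
  have hB : 0 ≤ ∑ i, ∑ q ∈ B i, max (‖x i - x q‖ - lhat i q) 0 ^ 2 :=
    sum_nonneg fun i _ => sum_nonneg fun q _ => sq_nonneg _
  have hterm := le_sum_sum_of_mem (fun i j => sq_nonneg (max (‖x i - a j‖ - dhat i j) 0)) hj
  have := le_add_sqrt_of_sq_max_le (C := c) (by unfold obj at hx; linarith)
  linarith [norm_le_norm_sub_add (x i) (a j)]

lemma norm_le_of_obj_le_of_mem_B {x : Fin n → EuclideanSpace ℝ (Fin d)} {c : ℝ}
    (hx : obj a A dhat B lhat x ≤ c) {i q : Fin n} (hq : q ∈ B i) :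
    ‖x i‖ ≤ ‖x q‖ + (lhat i q + √(2 * c)) := by
  have hA : 0 ≤ ∑ i, ∑ j ∈ A i, max (‖x i - a j‖ - dhat i j) 0 ^ 2 :=
    sum_nonneg fun i _ => sum_nonneg fun j _ => sq_nonneg _
  have hterm := le_sum_sum_of_mem (fun i q => sq_nonneg (max (‖x i - x q‖ - lhat i q) 0)) hq
  have := le_add_sqrt_of_sq_max_le (C := 2 * c) (by unfold obj at hx; linarith)
  linarith [norm_le_norm_sub_add (x i) (x q)]

lemma isBounded_obj_sublevel (hconn : ∀ i : Fin n, ∃ (r : ℕ) (p : ℕ → Fin n), p 0 = i ∧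
      (∀ t, t < r → p (t + 1) ∈ B (p t)) ∧ (A (p r)).Nonempty) (c : ℝ) :
    Bornology.IsBounded {x | obj a A dhat B lhat x ≤ c} := by
  have hbound (i : Fin n) : ∃ R, ∀ x, obj a A dhat B lhat x ≤ c → ‖x i‖ ≤ R := by
    obtain ⟨r, p, rfl, hpB, hpA⟩ := hconn i
    induction r generalizing p with
    | zero =>
      obtain ⟨j, hj⟩ := hpA
      exact ⟨_, fun x hx => norm_le_of_obj_le_of_mem_A hx hj⟩
    | succ r ih =>
      obtain ⟨R, hR⟩ := ih (fun t => p (t + 1)) (fun t ht => hpB (t + 1) (by omega)) hpA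
      exact ⟨_, fun x hx => (norm_le_of_obj_le_of_mem_B hx (hpB 0 r.succ_pos)).trans
        (add_le_add_left (hR x hx) _)⟩
  choose R hR using hbound
  exact (Bornology.IsBounded.pi fun i => Metric.isBounded_closedBall (x := 0) (r := R i)).subset
    fun x hx i _ => mem_closedBall_zero_iff.2 (hR i x hx)

lemma IsPPM.isCyclicBlockGradientSeq {X : ℕ → Fin n → EuclideanSpace ℝ (Fin d)}
    (hcard : ∀ i : Fin n, 1 ≤ (A i).card + (B i).card) (hX : IsPPM a A dhat B lhat X) :
    IsCyclicBlockGradientSeq (objGrad a A dhat B lhat)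
      (fun i => 1 / (4 * ((A i).card + (B i).card))) X := by
  intro k i
  have hm : ((A i).card + (B i).card : ℝ) ≠ 0 := by
    have : (1 : ℝ) ≤ (A i).card + (B i).card := by exact_mod_cast hcard i
    linarith
  have hP (c : EuclideanSpace ℝ (Fin d)) (r : ℝ) :
      projBall c r (X k i) = X k i - ballResidual r (X k i - c) := by
    rw [← sub_projBall, sub_sub_cancel]
  have hcenter (q : Fin n) : sweepPoint X k i q = if q < i then X (k + 1) q else X k q := by
    simp only [sweepPoint, Fin.lt_def]
  rw [hX k i, objGrad, sweepPoint_apply_self]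
  simp only [hP, hcenter, sum_sub_distrib, sum_const, ← Nat.cast_smul_eq_nsmul ℝ]
  match_scalars <;> field_simp <;> ring

end Localization

theorem stmt10_general (d n : ℕ) {J : Type*}
    (a : J → EuclideanSpace ℝ (Fin d))
    (A : Fin n → Finset J) (dhat : Fin n → J → ℝ)
    (B : Fin n → Finset (Fin n)) (lhat : Fin n → Fin n → ℝ)
    (hdhat : ∀ i, ∀ j ∈ A i, 0 ≤ dhat i j)
    (hlhat : ∀ i, ∀ q ∈ B i, 0 ≤ lhat i q)
    (hBsymm : ∀ i q : Fin n, q ∈ B i ↔ i ∈ B q)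
    (hlsymm : ∀ i q : Fin n, lhat i q = lhat q i)
    (hcard : ∀ i : Fin n, 1 ≤ (A i).card + (B i).card)
    (X : ℕ → Fin n → EuclideanSpace ℝ (Fin d))
    (hX : IsPPM a A dhat B lhat X)
    (hconn : ∀ i : Fin n, ∃ (r : ℕ) (c : ℕ → Fin n), c 0 = i ∧
      (∀ t, t < r → c (t + 1) ∈ B (c t)) ∧ (A (c r)).Nonempty) :
    (∀ p : Fin n → EuclideanSpace ℝ (Fin d), MapClusterPt p atTop X →
      ∀ y : Fin n → EuclideanSpace ℝ (Fin d), obj a A dhat B lhat p ≤ obj a A dhat B lhat y) ∧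
    Tendsto (fun k : ℕ => obj a A dhat B lhat (X k)) atTop
      (nhds (⨅ y : Fin n → EuclideanSpace ℝ (Fin d), obj a A dhat B lhat y)) := by
  have hm (i : Fin n) : (0 : ℝ) < (A i).card + (B i).card := by
    have : (1 : ℝ) ≤ (A i).card + (B i).card := by exact_mod_cast hcard i
    linarith
  have hτM (i : Fin n) :
      1 / (4 * ((A i).card + (B i).card)) * ((A i).card + 2 * (B i).card : ℝ) < 1 := by
    rw [one_div_mul_eq_div, div_lt_one (by linarith [hm i])]
    linarith [hm i]
  exact (hX.isCyclicBlockGradientSeq hcard).isMin_and_tendsto_iInf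
    (hasSeparableQuadraticMajorant_obj hdhat hlhat hBsymm hlsymm)
    (fun i => one_div_pos.2 (by linarith [hm i])) hτM
    (obj_add_sum_inner_objGrad_le hdhat hlhat hBsymm hlsymm)
    (uniformContinuous_objGrad hdhat hlhat) continuous_obj (isBounded_obj_sublevel hconn)

theorem stmt10 (d n : ℕ) (hd : 1 ≤ d) (hn : 1 ≤ n) {J : Type*} [Fintype J]
    (a : J → EuclideanSpace ℝ (Fin d))
    (A : Fin n → Finset J) (dhat : Fin n → J → ℝ)
    (B : Fin n → Finset (Fin n)) (lhat : Fin n → Fin n → ℝ)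
    (hdhat : ∀ i, ∀ j ∈ A i, 0 ≤ dhat i j)
    (hlhat : ∀ i, ∀ q ∈ B i, 0 ≤ lhat i q)
    (hBirr : ∀ i : Fin n, i ∉ B i)
    (hBsymm : ∀ i q : Fin n, q ∈ B i ↔ i ∈ B q)
    (hlsymm : ∀ i q : Fin n, lhat i q = lhat q i)
    (hcard : ∀ i : Fin n, 1 ≤ (A i).card + (B i).card)
    (X : ℕ → Fin n → EuclideanSpace ℝ (Fin d))
    (hX : IsPPM a A dhat B lhat X)
    (hconn : ∀ i : Fin n, ∃ (r : ℕ) (c : ℕ → Fin n), c 0 = i ∧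
      (∀ t, t < r → c (t + 1) ∈ B (c t)) ∧ (A (c r)).Nonempty) :
    (∀ p : Fin n → EuclideanSpace ℝ (Fin d), MapClusterPt p atTop X →
      ∀ y : Fin n → EuclideanSpace ℝ (Fin d), obj a A dhat B lhat p ≤ obj a A dhat B lhat y) ∧
    Tendsto (fun k : ℕ => obj a A dhat B lhat (X k)) atTop
      (nhds (⨅ y : Fin n → EuclideanSpace ℝ (Fin d), obj a A dhat B lhat y)) :=
  stmt10_general d n a A dhat B lhat hdhat hlhat hBsymm hlsymm hcard X hX hconn
end
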